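/- For the negative triangle C_3^- the balancing dimension equals 3. -/

import Mathlib

open Finset

/-- The sign of a real number, as an integer. -/
noncomputable def sgnZ (x : ℝ) : ℤ := if 0 < x then 1 else if x < 0 then -1 else 0

/-- The standard inner product on `ℝ^k`. -/
def dotp {k : ℕ} (a b : Fin k → ℝ) : ℝ := ∑ i, a i * b i

/-- Membership in `Ω^k` where `Ω = {-1,0,1}`. -/
def InOmega {k : ℕ} (a : Fin k → ℝ) : Prop := ∀ i, a i = -1 ∨ a i = 0 ∨ a i = 1

/-- `σ` is a sign function for the graph `G`: symmetric and `±1`-valued on edges,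
so that `(G, σ)` is a signed graph. -/
def IsSignFn {V : Type*} (G : SimpleGraph V) (σ : V → V → ℤ) : Prop :=
  (∀ u v, σ u v = σ v u) ∧ ∀ u v, G.Adj u v → σ u v = 1 ∨ σ u v = -1

/-- `ζ : V → Ω^k` is a vector valued (`k`-)switching function for the signed graph:
`⟨ζ u, ζ v⟩ ≠ 0` for every edge `uv`. -/
def IsSwitching {V : Type*} (G : SimpleGraph V) {k : ℕ} (ζ : V → Fin k → ℝ) : Prop :=
  (∀ v, InOmega (ζ v)) ∧ ∀ u v, G.Adj u v → dotp (ζ u) (ζ v) ≠ 0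

/-- The sign function of the switched signed graph `Σ^ζ`:
`σ^ζ(uv) = σ(uv) · sgn ⟨ζ u, ζ v⟩`. -/
noncomputable def switchSign {V : Type*} (σ : V → V → ℤ) {k : ℕ} (ζ : V → Fin k → ℝ) : V → V → ℤ :=
  fun u v => σ u v * sgnZ (dotp (ζ u) (ζ v))

/-- `ζ : V → Ω^k` is a positive `k`-switching function (a `k`-positive function):
it switches `Σ` to the all positive signed graph. -/
def IsPositive {V : Type*} (G : SimpleGraph V) (σ : V → V → ℤ) {k : ℕ}
    (ζ : V → Fin k → ℝ) : Prop :=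
  (∀ v, InOmega (ζ v)) ∧ ∀ u v, G.Adj u v → switchSign σ ζ u v = 1

/-- The balancing dimension: the least `k ≥ 1` admitting a `k`-positive function. -/
noncomputable def bdim {V : Type*} (G : SimpleGraph V) (σ : V → V → ℤ) : ℕ :=
  sInf {k | 1 ≤ k ∧ ∃ ζ : V → Fin k → ℝ, IsPositive G σ ζ}

/-- The strong balancing dimension: the least `k ≥ 1` admitting an injective
`k`-positive function. -/
noncomputable def sbdim {V : Type*} (G : SimpleGraph V) (σ : V → V → ℤ) : ℕ :=
  sInf {k | 1 ≤ k ∧ ∃ ζ : V → Fin k → ℝ, Function.Injective ζ ∧ IsPositive G σ ζ}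

/-!
For `x, y, z ∈ {-1, 0, 1}` one has `xz + yz - xy ≤ 1`, so summing over coordinates,
`⟨a, c⟩ + ⟨b, c⟩ - ⟨a, b⟩ ≤ k` for `a, b, c ∈ Ω^k`. If `ζ` is positive on a triangle whose only
negative edge is `ab`, the three inner products are integers with `⟨a, c⟩, ⟨b, c⟩ ≥ 1` and
`⟨a, b⟩ ≤ -1`, which forces `k ≥ 3`. An explicit function into `Ω^3` attains this bound.
-/

lemma sgnZ_eq_one_iff {x : ℝ} : sgnZ x = 1 ↔ 0 < x := by
  unfold sgnZ; split_ifs <;> simp_all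

lemma sgnZ_eq_neg_one_iff {x : ℝ} : sgnZ x = -1 ↔ x < 0 := by
  unfold sgnZ; split_ifs with hpos hneg <;> simp_all
  linarith

section Switching

variable {V : Type*} {σ : V → V → ℤ} {k : ℕ} {ζ : V → Fin k → ℝ} {u v : V}

lemma dotp_pos_of_switchSign_eq_one (hσ : σ u v = 1) (h : switchSign σ ζ u v = 1) :
    0 < dotp (ζ u) (ζ v) := by
  rwa [switchSign, hσ, one_mul, sgnZ_eq_one_iff] at h

lemma dotp_neg_of_switchSign_eq_one (hσ : σ u v = -1) (h : switchSign σ ζ u v = 1) :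
    dotp (ζ u) (ζ v) < 0 := by
  rw [switchSign, hσ, neg_one_mul, neg_eq_iff_eq_neg, sgnZ_eq_neg_one_iff] at h
  exact h

end Switching

section Omega

variable {k : ℕ} {a b c : Fin k → ℝ}

lemma InOmega.exists_intCast (ha : InOmega a) : ∃ f : Fin k → ℤ, ∀ i, a i = f i := by
  have hcoord (i : Fin k) : ∃ n : ℤ, a i = n := by
    rcases ha i with h | h | h <;> rw [h]
    exacts [⟨-1, by simp⟩, ⟨0, by simp⟩, ⟨1, by simp⟩]
  exact ⟨fun i => (hcoord i).choose, fun i => (hcoord i).choose_spec⟩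

lemma InOmega.exists_dotp_eq_intCast (ha : InOmega a) (hb : InOmega b) :
    ∃ n : ℤ, dotp a b = n := by
  obtain ⟨f, hf⟩ := ha.exists_intCast
  obtain ⟨g, hg⟩ := hb.exists_intCast
  exact ⟨∑ i, f i * g i, by simp only [dotp, hf, hg]; push_cast; rfl⟩

lemma InOmega.one_le_dotp (ha : InOmega a) (hb : InOmega b) (h : 0 < dotp a b) :
    1 ≤ dotp a b := by
  obtain ⟨n, hn⟩ := ha.exists_dotp_eq_intCast hb
  rw [hn] at h ⊢
  exact_mod_cast (Int.cast_pos.mp h : 0 < n)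

lemma InOmega.dotp_le_neg_one (ha : InOmega a) (hb : InOmega b) (h : dotp a b < 0) :
    dotp a b ≤ -1 := by
  obtain ⟨n, hn⟩ := ha.exists_dotp_eq_intCast hb
  rw [hn] at h ⊢
  exact_mod_cast Int.le_sub_one_of_lt (Int.cast_lt_zero.mp h)

/-- For `z = ±1` the left side is `1 - (1 - xz)(1 - yz)`, and for `z = 0` it is `-xy`. -/
lemma mul_add_mul_sub_mul_le_one {x y z : ℝ} (hx : x = -1 ∨ x = 0 ∨ x = 1)
    (hy : y = -1 ∨ y = 0 ∨ y = 1) (hz : z = -1 ∨ z = 0 ∨ z = 1) :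
    x * z + y * z - x * y ≤ 1 := by
  rcases hx with rfl | rfl | rfl <;> rcases hy with rfl | rfl | rfl <;>
    rcases hz with rfl | rfl | rfl <;> norm_num

lemma InOmega.dotp_add_dotp_sub_dotp_le (ha : InOmega a) (hb : InOmega b) (hc : InOmega c) :
    dotp a c + dotp b c - dotp a b ≤ k := by
  calc dotp a c + dotp b c - dotp a b = ∑ i, (a i * c i + b i * c i - a i * b i) := by
        simp only [dotp, Finset.sum_sub_distrib, Finset.sum_add_distrib]
    _ ≤ ∑ _i : Fin k, (1 : ℝ) :=
        Finset.sum_le_sum fun i _ => mul_add_mul_sub_mul_le_one (ha i) (hb i) (hc i)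
    _ = k := by simp

theorem InOmega.three_le_of_dotp_neg_of_dotp_pos (ha : InOmega a) (hb : InOmega b)
    (hc : InOmega c) (hab : dotp a b < 0) (hac : 0 < dotp a c) (hbc : 0 < dotp b c) :
    3 ≤ k := by
  have hsum := ha.dotp_add_dotp_sub_dotp_le hb hc
  have := ha.one_le_dotp hc hac
  have := hb.one_le_dotp hc hbc
  have := ha.dotp_le_neg_one hb hab
  exact_mod_cast (by linarith : (3 : ℝ) ≤ k)

end Omega

theorem IsPositive.three_le_of_triangle {V : Type*} {G : SimpleGraph V} {σ : V → V → ℤ}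
    {k : ℕ} {ζ : V → Fin k → ℝ} (hζ : IsPositive G σ ζ) {u v w : V} (huv : G.Adj u v)
    (huw : G.Adj u w) (hvw : G.Adj v w) (hσuv : σ u v = -1) (hσuw : σ u w = 1)
    (hσvw : σ v w = 1) : 3 ≤ k :=
  (hζ.1 u).three_le_of_dotp_neg_of_dotp_pos (hζ.1 v) (hζ.1 w)
    (dotp_neg_of_switchSign_eq_one hσuv (hζ.2 u v huv))
    (dotp_pos_of_switchSign_eq_one hσuw (hζ.2 u w huw))
    (dotp_pos_of_switchSign_eq_one hσvw (hζ.2 v w hvw))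

theorem bdim_eq_of_isPositive {V : Type*} {G : SimpleGraph V} {σ : V → V → ℤ} {k : ℕ}
    (hk : 1 ≤ k) {ζ : V → Fin k → ℝ} (hζ : IsPositive G σ ζ)
    (hmin : ∀ m (ξ : V → Fin m → ℝ), IsPositive G σ ξ → k ≤ m) : bdim G σ = k :=
  le_antisymm (Nat.sInf_le ⟨hk, ζ, hζ⟩)
    (le_csInf ⟨k, hk, ζ, hζ⟩ fun m ⟨_, ξ, hξ⟩ => hmin m ξ hξ)

/-- The negative triangle `C₃⁻` (one negative edge) has balancing dimension `3`. -/
theorem bdim_C3_neg :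
    bdim (⊤ : SimpleGraph (Fin 3))
      (fun u v => if (u = 0 ∧ v = 1) ∨ (u = 1 ∧ v = 0) then (-1 : ℤ) else 1) = 3 := by
  -- every coordinate attains the bound of `mul_add_mul_sub_mul_le_one`, as it must for `k = 3`
  refine bdim_eq_of_isPositive (by norm_num) (ζ := ![![1, 1, 1], ![-1, 0, 0], ![-1, 1, 1]])
    ⟨fun v i => ?_, fun u v _ => ?_⟩
    fun m ξ hξ => hξ.three_le_of_triangle (u := 0) (v := 1) (w := 2)
      (by decide) (by decide) (by decide) (by decide) (by decide) (by decide)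
  · fin_cases v <;> fin_cases i <;> norm_num
  · fin_cases u <;> fin_cases v <;>
      norm_num [switchSign, dotp, Fin.sum_univ_three, sgnZ, Matrix.cons_val_two,
        Matrix.tail_cons, Matrix.head_cons]
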